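/- arXiv:1111.1141 — 4 statements merged into one kernel-verified Lean document; each statement's English description precedes it below -/
import Mathlib

section
/- If Γ : S_L → ℝ³ is an injective arc-length parametrization of a closed curve (i.e. |Γ'| = 1 a.e.) such that |Γ'(x) - Γ'(y)| ≤ C|x-y|^α for all x, y, then there exists a constant λ = λ(C, α, L) > 0 such that |Γ(x) - Γ(y)| ≥ λ|x-y| for all x, y ∈ S_L; i.e. Γ is bi-Lipschitz. -/
/-!
Hölder continuity of `Γ'` gives a scale `δ > 0` below which unit tangents differ by at most `1`;
projecting onto the tangent at one endpoint then shows that chords of arcs shorter than `δ` are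
at least half as long as the arcs. Arcs of length at least `δ` are handled by compactness: the
curve descends to a continuous injective map on the compact circle, so the chord length is
bounded below by a positive constant on such pairs, which is comparable to the arc length since
the circle has bounded diameter.
-/

open MeasureTheory Set
open scoped InnerProductSpace

theorem continuous_of_dist_le_mul_dist_rpow {X Y Z : Type*} [TopologicalSpace X]
    [PseudoMetricSpace Y] [PseudoMetricSpace Z] {f : X → Y} {g : X → Z} (hg : Continuous g)
    {C α : ℝ} (hα : 0 < α) (h : ∀ x y, dist (f x) (f y) ≤ C * dist (g x) (g y) ^ α) :
    Continuous f := by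
  refine continuous_iff_continuousAt.2 fun x => tendsto_iff_dist_tendsto_zero.2 ?_
  have hbound : Continuous fun y => C * dist (g y) (g x) ^ α :=
    ((hg.dist continuous_const).rpow_const fun _ => Or.inr hα.le).const_mul C
  refine squeeze_zero (fun _ => dist_nonneg) (fun y => h y x) ?_
  simpa [Real.zero_rpow hα.ne'] using hbound.tendsto x

theorem exists_pos_forall_mul_rpow_le_one (C : ℝ) {α : ℝ} (hα : 0 < α) :
    ∃ δ > 0, ∀ d, 0 ≤ d → d ≤ δ → C * d ^ α ≤ 1 := by
  have hcont : ContinuousAt (fun d : ℝ => C * d ^ α) 0 :=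
    (Real.continuousAt_rpow_const _ _ (Or.inr hα.le)).const_mul C
  have hlt : ∀ᶠ d in nhds (0 : ℝ), C * d ^ α < 1 :=
    hcont.eventually_lt continuousAt_const (by simp [Real.zero_rpow hα.ne'])
  obtain ⟨ε, hε, hball⟩ := Metric.eventually_nhds_iff.1 hlt
  refine ⟨ε / 2, half_pos hε, fun d hd hdδ => (hball ?_).le⟩
  rw [Real.dist_0_eq_abs, abs_of_nonneg hd]
  linarith

theorem half_le_inner_of_norm_sub_le_one {E : Type*} [NormedAddCommGroup E]
    [InnerProductSpace ℝ E] {u v : E} (hu : ‖u‖ = 1) (hv : ‖v‖ = 1) (h : ‖u - v‖ ≤ 1) :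
    1 / 2 ≤ ⟪u, v⟫_ℝ := by
  have := norm_sub_sq_real u v
  rw [hu, hv] at this
  nlinarith [norm_nonneg (u - v)]

theorem mul_abs_sub_le_norm_sub_of_le_inner {E : Type*} [NormedAddCommGroup E]
    [InnerProductSpace ℝ E] {Γ Γ' : ℝ → E} {v : E} (hv : ‖v‖ ≤ 1) {a b c : ℝ}
    (hderiv : ∀ t ∈ uIcc a b, HasDerivAt Γ (Γ' t) t) (hc : ∀ t ∈ uIcc a b, c ≤ ⟪v, Γ' t⟫_ℝ) :
    c * |b - a| ≤ ‖Γ b - Γ a‖ := by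
  wlog hab : a ≤ b generalizing a b
  · rw [abs_sub_comm, norm_sub_rev]
    exact this (uIcc_comm a b ▸ hderiv) (uIcc_comm a b ▸ hc) (le_of_not_ge hab)
  rw [uIcc_of_le hab] at hderiv hc
  have hderiv' : ∀ t ∈ Icc a b, HasDerivAt (fun t => ⟪v, Γ t⟫_ℝ) ⟪v, Γ' t⟫_ℝ t := fun t ht =>
    ((innerSL ℝ v).hasFDerivAt.comp_hasDerivAt t (hderiv t ht))
  have hmono := (convex_Icc a b).mul_sub_le_image_sub_of_le_deriv
    (fun t ht => (hderiv' t ht).continuousAt.continuousWithinAt)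
    (fun t ht => (hderiv' t (interior_subset ht)).differentiableAt.differentiableWithinAt)
    (fun t ht => (hderiv' t (interior_subset ht)).deriv ▸ hc t (interior_subset ht))
    a (left_mem_Icc.2 hab) b (right_mem_Icc.2 hab) hab
  calc c * |b - a| = c * (b - a) := by rw [abs_of_nonneg (sub_nonneg.2 hab)]
    _ ≤ ⟪v, Γ b - Γ a⟫_ℝ := by rw [inner_sub_right]; exact hmono
    _ ≤ ‖v‖ * ‖Γ b - Γ a‖ := real_inner_le_norm _ _
    _ ≤ ‖Γ b - Γ a‖ := mul_le_of_le_one_left (norm_nonneg _) hv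

theorem AddCircle.dist_coe_le_abs_sub (L x y : ℝ) :
    dist (x : AddCircle L) (y : AddCircle L) ≤ |x - y| := by
  rw [dist_eq_norm, ← AddCircle.coe_sub, ← Real.norm_eq_abs]
  exact QuotientAddGroup.norm_mk_le_norm

theorem AddCircle.exists_int_abs_sub_eq_dist (L x y : ℝ) :
    ∃ n : ℤ, |x - n * L - y| = dist (x : AddCircle L) (y : AddCircle L) := by
  refine ⟨round (L⁻¹ * (x - y)), ?_⟩
  rw [dist_eq_norm, ← AddCircle.coe_sub, AddCircle.norm_eq]
  ring_nf

theorem exists_pos_le_dist_of_le_dist {X Y : Type*} [MetricSpace X] [CompactSpace X]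
    [MetricSpace Y] {f : X → Y} (hf : Continuous f) (hinj : Function.Injective f)
    {δ : ℝ} (hδ : 0 < δ) : ∃ m > 0, ∀ p q, δ ≤ dist p q → m ≤ dist (f p) (f q) := by
  set K := {pq : X × X | δ ≤ dist pq.1 pq.2}
  have hK : IsCompact K := (isClosed_le continuous_const continuous_dist).isCompact
  have hpos : ∀ pq ∈ K, 0 < dist (f pq.1) (f pq.2) :=
    fun pq hpq => dist_pos.2 (hinj.ne (dist_pos.1 (hδ.trans_le hpq)))
  obtain ⟨m, hm, hmin⟩ := hK.exists_forall_le' (hf.fst'.dist hf.snd').continuousOn hpos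
  exact ⟨m, hm, fun p q hpq => hmin (p, q) hpq⟩

theorem exists_pos_mul_dist_le_of_forall_dist_le {X Y : Type*} [MetricSpace X] [CompactSpace X]
    [MetricSpace Y] {f : X → Y} (hf : Continuous f) (hinj : Function.Injective f)
    {δ c : ℝ} (hδ : 0 < δ) (hc : 0 < c)
    (hloc : ∀ p q, dist p q ≤ δ → c * dist p q ≤ dist (f p) (f q)) :
    ∃ lam > 0, ∀ p q, lam * dist p q ≤ dist (f p) (f q) := by
  obtain ⟨m, hm, hfar⟩ := exists_pos_le_dist_of_le_dist hf hinj hδ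
  set D := Metric.diam (univ : Set X) + 1
  have hdist : ∀ p q : X, dist p q < D := fun p q =>
    (Metric.dist_le_diam_of_mem isCompact_univ.isBounded (mem_univ p) (mem_univ q)).trans_lt
      (lt_add_one _)
  have hD : 0 < D := add_pos_of_nonneg_of_pos Metric.diam_nonneg one_pos
  refine ⟨min c (m / D), lt_min hc (div_pos hm hD), fun p q => ?_⟩
  rcases le_total (dist p q) δ with hnear | hfar'
  · exact (mul_le_mul_of_nonneg_right (min_le_left _ _) dist_nonneg).trans (hloc p q hnear)
  · calc min c (m / D) * dist p q ≤ m / D * D :=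
          mul_le_mul (min_le_right _ _) (hdist p q).le dist_nonneg (div_pos hm hD).le
      _ = m := div_mul_cancel₀ m hD.ne'
      _ ≤ dist (f p) (f q) := hfar p q hfar'

theorem Function.Periodic.lift_injective {β : Type*} {f : ℝ → β} {L : ℝ} (hL : 0 < L)
    (hper : Function.Periodic f L) (hinj : InjOn f (Ico 0 L)) :
    Function.Injective (hper.lift : AddCircle L → β) := by
  have : Fact (0 < L) := ⟨hL⟩
  intro p q hpq
  rw [← AddCircle.coe_equivIco (a := 0) (y := p), ← AddCircle.coe_equivIco (a := 0) (y := q)]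
    at hpq ⊢
  rw [hper.lift_coe, hper.lift_coe] at hpq
  have hIco : Ico (0 : ℝ) (0 + L) = Ico 0 L := by rw [zero_add]
  exact congrArg _ (hinj (hIco ▸ (AddCircle.equivIco L 0 p).2)
    (hIco ▸ (AddCircle.equivIco L 0 q).2) hpq)

/-- Unit vectors at distance at most `1` make an angle of at most `60°`, so the projection of
the chord onto the tangent `Γ' y` is at least half the arc. -/
theorem dist_div_two_le_norm_sub_of_unit_speed {E : Type*} [NormedAddCommGroup E]
    [InnerProductSpace ℝ E]
    {L δ : ℝ} {Γ Γ' : ℝ → E} (hper : Function.Periodic Γ L)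
    (hderiv : ∀ x, HasDerivAt Γ (Γ' x) x) (hunit : ∀ x, ‖Γ' x‖ = 1)
    (hδ : ∀ x y : ℝ, dist (x : AddCircle L) (y : AddCircle L) ≤ δ → ‖Γ' x - Γ' y‖ ≤ 1)
    {x y : ℝ} (hxy : dist (x : AddCircle L) (y : AddCircle L) ≤ δ) :
    dist (x : AddCircle L) (y : AddCircle L) / 2 ≤ ‖Γ x - Γ y‖ := by
  obtain ⟨n, hn⟩ := AddCircle.exists_int_abs_sub_eq_dist L x y
  have hnear : ∀ t ∈ uIcc y (x - n * L), 1 / 2 ≤ ⟪Γ' y, Γ' t⟫_ℝ := fun t ht => by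
    refine half_le_inner_of_norm_sub_le_one (hunit y) (hunit t) ?_
    rw [norm_sub_rev]
    refine hδ t y (le_trans ?_ hxy)
    rw [← hn]
    exact (AddCircle.dist_coe_le_abs_sub ..).trans (abs_sub_left_of_mem_uIcc ht)
  have := mul_abs_sub_le_norm_sub_of_le_inner (hunit y).le (fun t _ => hderiv t) hnear
  rwa [hn, hper.sub_int_mul_eq, mul_comm, ← div_eq_mul_one_div] at this

theorem curve_biLipschitz_general (L : ℝ) (hL : 0 < L) (C α : ℝ)
    (hα : α ∈ Set.Ioo (0 : ℝ) 1)
    (Γ Γ' : ℝ → EuclideanSpace ℝ (Fin 3))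
    (hper : Function.Periodic Γ L)
    (hinj : Set.InjOn Γ (Set.Ico 0 L))
    (hderiv : ∀ x, HasDerivAt Γ (Γ' x) x)
    (hunit : ∀ᵐ x, ‖Γ' x‖ = 1)
    (hhol : ∀ x y : ℝ, ‖Γ' x - Γ' y‖ ≤ C * dist (x : AddCircle L) (y : AddCircle L) ^ α) :
    ∃ lam : ℝ, 0 < lam ∧
      ∀ x y : ℝ, lam * dist (x : AddCircle L) (y : AddCircle L) ≤ ‖Γ x - Γ y‖ := by
  have : Fact (0 < L) := ⟨hL⟩
  have hΓ'cont : Continuous Γ' :=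
    continuous_of_dist_le_mul_dist_rpow (g := fun x : ℝ => (x : AddCircle L))
      (AddCircle.continuous_mk' L) hα.1
      (by simpa only [dist_eq_norm] using hhol)
  have hunit' : ∀ x, ‖Γ' x‖ = 1 :=
    congrFun ((hΓ'cont.norm.ae_eq_iff_eq volume continuous_const).1 hunit)
  obtain ⟨δ, hδ, hsmall⟩ := exists_pos_forall_mul_rpow_le_one C hα.1
  have hlocal : ∀ p q : AddCircle L,
      dist p q ≤ δ → 1 / 2 * dist p q ≤ dist (hper.lift p) (hper.lift q) := by
    intro p q
    induction p using QuotientAddGroup.induction_on with | H x => ?_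
    induction q using QuotientAddGroup.induction_on with | H y => ?_
    intro hxy
    rw [one_div_mul_eq_div, hper.lift_coe, hper.lift_coe, dist_eq_norm (Γ x)]
    exact dist_div_two_le_norm_sub_of_unit_speed hper hderiv hunit'
      (fun x y h => (hhol x y).trans (hsmall _ dist_nonneg h)) hxy
  obtain ⟨lam, hlam, h⟩ := exists_pos_mul_dist_le_of_forall_dist_le
    ((continuous_iff_continuousAt.2 fun x => (hderiv x).continuousAt).quotient_liftOn' _)
    (hper.lift_injective hL hinj) hδ one_half_pos hlocal
  exact ⟨lam, hlam, fun x y => by simpa only [hper.lift_coe, dist_eq_norm (Γ x)] using h x y⟩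

/-- If `Γ : S_L → ℝ³` (formalized as an `L`-periodic map on `ℝ`,
injective on a fundamental domain) is an arc-length parametrization (`‖Γ'‖ = 1` a.e.)
whose derivative is `α`-Hölder with constant `C` (with respect to the intrinsic
distance on the circle `ℝ/Lℤ`), then `Γ` is bi-Lipschitz: there is
`λ = λ(C, α, L) > 0` with `‖Γ(x) - Γ(y)‖ ≥ λ·dist(x,y)`. -/
theorem curve_biLipschitz (L : ℝ) (hL : 0 < L) (C α : ℝ) (hC : 0 < C)
    (hα : α ∈ Set.Ioo (0 : ℝ) 1)
    (Γ Γ' : ℝ → EuclideanSpace ℝ (Fin 3))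
    (hper : Function.Periodic Γ L)
    (hinj : Set.InjOn Γ (Set.Ico 0 L))
    (hderiv : ∀ x, HasDerivAt Γ (Γ' x) x)
    (hunit : ∀ᵐ x, ‖Γ' x‖ = 1)
    (hhol : ∀ x y : ℝ, ‖Γ' x - Γ' y‖ ≤ C * dist (x : AddCircle L) (y : AddCircle L) ^ α) :
    ∃ lam : ℝ, 0 < lam ∧
      ∀ x y : ℝ, lam * dist (x : AddCircle L) (y : AddCircle L) ≤ ‖Γ x - Γ y‖ :=
  curve_biLipschitz_general L hL C α hα Γ Γ' hper hinj hderiv hunit hhol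
end

section
/- Let Γ : S_L → ℝⁿ be an arc-length parametrization with |Γ'(x) - Γ'(y)| ≤ C|x-y|^α, and let x < z < y in S_L. Then the unit secant vectors satisfy |(Γ(x) - Γ(y))/|Γ(x) - Γ(y)| - (Γ(x) - Γ(z))/|Γ(x) - Γ(z)|| ≤ 5C|x - y|^α. -/
open MeasureTheory Set

/-
On `[x, y]` the Hölder bound keeps `Γ'` within `C (y - x)^α` of the unit tangent `Γ' x`, so by the
mean value inequality the chord `Γ y - Γ x` is within `C (y - x)^α (y - x)` of `(y - x) • Γ' x`.
Normalizing costs a factor `2`, so the unit secants towards `Γ y` and towards `Γ z` both lie within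
`2 C (y - x)^α` of `Γ' x`, hence within `4 C |x - y|^α` of each other.
-/

open NormedSpace

section

variable {E : Type*} [NormedAddCommGroup E] [NormedSpace ℝ E]

theorem norm_normalize_sub_normalize_le (u : E) {v : E} (hv : v ≠ 0) :
    ‖normalize u - normalize v‖ ≤ 2 * ‖u - v‖ / ‖v‖ := by
  have hv' : 0 < ‖v‖ := norm_pos_iff.mpr hv
  have hsplit : normalize u - normalize v = ‖v‖⁻¹ • (u - v) + (‖u‖⁻¹ - ‖v‖⁻¹) • u := by
    simp only [NormedSpace.normalize, sub_smul, smul_sub]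
    abel
  have hrescale : |‖u‖⁻¹ - ‖v‖⁻¹| * ‖u‖ ≤ ‖v‖⁻¹ * ‖u - v‖ := by
    rcases eq_or_ne u 0 with rfl | hu
    · simp [hv'.ne']
    have hu' : 0 < ‖u‖ := norm_pos_iff.mpr hu
    have hcancel : |‖u‖⁻¹ - ‖v‖⁻¹| * ‖u‖ = ‖v‖⁻¹ * |‖u‖ - ‖v‖| := by
      rw [inv_sub_inv hu'.ne' hv'.ne', abs_div, abs_mul, abs_of_pos hu', abs_of_pos hv',
        abs_sub_comm]
      field_simp
    rw [hcancel]
    gcongr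
    exact abs_norm_sub_norm_le u v
  calc ‖normalize u - normalize v‖
      ≤ ‖v‖⁻¹ * ‖u - v‖ + |‖u‖⁻¹ - ‖v‖⁻¹| * ‖u‖ := by
        rw [hsplit, ← Real.norm_eq_abs, ← norm_smul,
          ← norm_smul_of_nonneg (inv_nonneg.mpr hv'.le)]
        exact norm_add_le _ _
    _ ≤ 2 * ‖u - v‖ / ‖v‖ := by
        rw [mul_div_assoc, div_eq_inv_mul]
        linarith

theorem norm_sub_sub_smul_le_of_norm_deriv_sub_le {f f' : ℝ → E} {v : E} {M a b : ℝ}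
    (hab : a ≤ b) (hf : ∀ t ∈ Icc a b, HasDerivAt f (f' t) t)
    (bound : ∀ t ∈ Icc a b, ‖f' t - v‖ ≤ M) :
    ‖f b - f a - (b - a) • v‖ ≤ M * (b - a) := by
  have hg : ∀ t ∈ Icc a b, HasDerivWithinAt (fun s => f s - s • v) (f' t - v) (Icc a b) t :=
    fun t ht => (((hf t ht).sub ((hasDerivAt_id t).smul_const v))).hasDerivWithinAt.congr_deriv
      (by rw [one_smul])
  have := norm_image_sub_le_of_norm_deriv_le_segment' hg
    (fun t ht => bound t (Ico_subset_Icc_self ht)) b (right_mem_Icc.mpr hab)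
  rwa [show f b - b • v - (f a - a • v) = f b - f a - (b - a) • v by rw [sub_smul]; abel] at this

theorem norm_normalize_sub_deriv_le {f f' : ℝ → E} {M a b : ℝ} (hab : a < b)
    (hf : ∀ t ∈ Icc a b, HasDerivAt f (f' t) t) (hunit : ‖f' a‖ = 1)
    (bound : ∀ t ∈ Icc a b, ‖f' t - f' a‖ ≤ M) :
    ‖normalize (f b - f a) - f' a‖ ≤ 2 * M := by
  have hba : 0 < b - a := sub_pos.mpr hab
  have hnorm : ‖(b - a) • f' a‖ = b - a := by
    rw [norm_smul, hunit, Real.norm_of_nonneg hba.le, mul_one]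
  have hdir : normalize ((b - a) • f' a) = f' a := by
    rw [normalize_smul_of_pos hba, normalize_eq_self_of_norm_eq_one hunit]
  calc ‖normalize (f b - f a) - f' a‖
      = ‖normalize (f b - f a) - normalize ((b - a) • f' a)‖ := by rw [hdir]
    _ ≤ 2 * ‖f b - f a - (b - a) • f' a‖ / ‖(b - a) • f' a‖ :=
        norm_normalize_sub_normalize_le _ (by rw [← norm_pos_iff, hnorm]; exact hba)
    _ ≤ 2 * (M * (b - a)) / (b - a) := by
        rw [hnorm]
        gcongr
        exact norm_sub_sub_smul_le_of_norm_deriv_sub_le hab.le hf bound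
    _ = 2 * M := by field_simp

end

theorem unit_secant_estimate_general (n : ℕ) (C α : ℝ) (hC : 0 < C) (hα : α ∈ Set.Ioo (0 : ℝ) 1)
    (Γ Γ' : ℝ → EuclideanSpace ℝ (Fin n))
    (hderiv : ∀ x, HasDerivAt Γ (Γ' x) x)
    (hunit : ∀ x, ‖Γ' x‖ = 1)
    (hhol : ∀ x y : ℝ, ‖Γ' x - Γ' y‖ ≤ C * |x - y| ^ α)
    (x z y : ℝ) (hxz : x < z) (hzy : z < y) :
    ‖‖Γ x - Γ y‖⁻¹ • (Γ x - Γ y) - ‖Γ x - Γ z‖⁻¹ • (Γ x - Γ z)‖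
      ≤ 5 * C * |x - y| ^ α := by
  set M := C * (y - x) ^ α
  have bound : ∀ t ∈ Icc x y, ‖Γ' t - Γ' x‖ ≤ M := fun t ht =>
    (hhol t x).trans <| mul_le_mul_of_nonneg_left (Real.rpow_le_rpow (abs_nonneg _) (by
      rw [abs_of_nonneg (sub_nonneg.mpr ht.1)]
      linarith [ht.2]) hα.1.le) hC.le
  have hy := norm_normalize_sub_deriv_le (hxz.trans hzy) (fun t _ => hderiv t) (hunit x) bound
  have hz := norm_normalize_sub_deriv_le hxz (fun t _ => hderiv t) (hunit x)
    fun t ht => bound t ⟨ht.1, ht.2.trans hzy.le⟩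
  have hsecants : ‖Γ x - Γ y‖⁻¹ • (Γ x - Γ y) - ‖Γ x - Γ z‖⁻¹ • (Γ x - Γ z)
      = (normalize (Γ z - Γ x) - Γ' x) - (normalize (Γ y - Γ x) - Γ' x) := by
    rw [← neg_sub (Γ y), ← neg_sub (Γ z), ← NormedSpace.normalize, ← NormedSpace.normalize,
      normalize_neg, normalize_neg]
    abel
  have hM : 0 ≤ M := mul_nonneg hC.le (Real.rpow_nonneg (by linarith) α)
  calc _ ≤ 2 * M + 2 * M := hsecants ▸ (norm_sub_le _ _).trans (add_le_add hz hy)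
    _ ≤ 5 * C * |x - y| ^ α := by
        rw [abs_sub_comm, abs_of_pos (by linarith)]
        linarith

/-- For an injective arc-length parametrization `Γ` with `α`-Hölder
derivative (constant `C`) and `x < z < y`, the unit secant vectors from `Γ(x)` to
`Γ(y)` resp. `Γ(z)` differ by at most `5C|x-y|^α`. -/
theorem unit_secant_estimate (n : ℕ) (C α : ℝ) (hC : 0 < C) (hα : α ∈ Set.Ioo (0 : ℝ) 1)
    (Γ Γ' : ℝ → EuclideanSpace ℝ (Fin n))
    (hinj : Function.Injective Γ)
    (hderiv : ∀ x, HasDerivAt Γ (Γ' x) x)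
    (hunit : ∀ x, ‖Γ' x‖ = 1)
    (hhol : ∀ x y : ℝ, ‖Γ' x - Γ' y‖ ≤ C * |x - y| ^ α)
    (x z y : ℝ) (hxz : x < z) (hzy : z < y) :
    ‖‖Γ x - Γ y‖⁻¹ • (Γ x - Γ y) - ‖Γ x - Γ z‖⁻¹ • (Γ x - Γ z)‖
      ≤ 5 * C * |x - y| ^ α :=
  unit_secant_estimate_general n C α hC hα Γ Γ' hderiv hunit hhol x z y hxz hzy
end

section
/- If Γ : S_L → ℝ³ is an injective arc-length parametrization of a curve γ with Γ ∈ C^{1,α}(S_L) where α > 1 - 2/p for some p > 2, then the Menger curvature energy M_p(γ) = ∫∫∫_{S_L³} R^{-p}(Γ(x),Γ(y),Γ(z)) dx dy dz is finite. -/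
/-!
On short arcs `Γ` stays close to its chords: expanding `Γ` at the middle of three parameters
`u ≤ v ≤ w` puts `Γ v` within `2C (w-u)^α (v-u)(w-v)/(w-u)` of the segment `[Γ u, Γ w]`, while
`|Γ s - Γ t| ≥ |s - t|/2`; as the triangle fits in the parallelogram spanned by its base and
height, `1/R ≤ 128 C (w-u)^(α-1)`. Away from the diagonal, injectivity and compactness bound
`|Γ s - Γ t|` from below, and `1/R ≤ 32/|a - c|` for any two of the three points. Hence, with `d`
the distance on `ℝ/Lℤ`, `R^{-p}(Γx, Γy, Γz) ≲ 1 + d(x,y)^q d(x,z)^q` for `q = (α-1)p/2`, and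
`q > -1` is exactly `α > 1 - 2/p`, so `t ↦ d(x,t)^q` is integrable on the circle, uniformly in `x`.
-/

open MeasureTheory Set Real ENNReal

/-- The Menger curvature `1/R(a,b,c) = 4·H²(conv{a,b,c})/(|a-b||b-c||a-c|)`. -/
noncomputable def mengerCurv {n : ℕ} (a b c : EuclideanSpace ℝ (Fin n)) : ℝ :=
  4 * (μH[2] (convexHull ℝ {a, b, c})).toReal / (dist a b * dist b c * dist a c)

/-- The Menger curvature energy `M_p(γ) = ∭_{S_L³} R^{-p}(Γx, Γy, Γz) dx dy dz`. -/
noncomputable def mengerEnergy (p L : ℝ) (Γ : ℝ → EuclideanSpace ℝ (Fin 3)) : ℝ≥0∞ :=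
  ∫⁻ x in Set.Ico (0 : ℝ) L, ∫⁻ y in Set.Ico (0 : ℝ) L, ∫⁻ z in Set.Ico (0 : ℝ) L,
    ENNReal.ofReal (mengerCurv (Γ x) (Γ y) (Γ z) ^ p)

section Triangle

variable {E : Type*} [NormedAddCommGroup E] [NormedSpace ℝ E]

lemma lipschitzWith_two_parallelogram (a U V : E) (hU : ‖U‖ ≤ 1) (hV : ‖V‖ ≤ 1) :
    LipschitzWith 2 fun x : Fin 2 → ℝ ↦ a + x 0 • U + x 1 • V := by
  refine LipschitzWith.of_dist_le_mul fun x y ↦ ?_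
  have hxy : a + x 0 • U + x 1 • V - (a + y 0 • U + y 1 • V)
      = (x 0 - y 0) • U + (x 1 - y 1) • V := by
    simp only [sub_smul]; abel
  rw [dist_eq_norm, hxy]
  calc ‖(x 0 - y 0) • U + (x 1 - y 1) • V‖
      ≤ |x 0 - y 0| * 1 + |x 1 - y 1| * 1 := by
        refine (norm_add_le _ _).trans (add_le_add ?_ ?_) <;>
          rw [norm_smul, Real.norm_eq_abs] <;> gcongr
    _ ≤ dist x y + dist x y := by
        simp only [mul_one, ← Real.dist_eq]
        exact add_le_add (dist_le_pi_dist x y 0) (dist_le_pi_dist x y 1)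
    _ = (2 : NNReal) * dist x y := by push_cast; ring

lemma hausdorffMeasure_parallelogram_le [MeasurableSpace E] [BorelSpace E] (a U V : E)
    (hU : ‖U‖ ≤ 1) (hV : ‖V‖ ≤ 1) (s t : ℝ) :
    μH[2] ((fun x : Fin 2 → ℝ ↦ a + x 0 • U + x 1 • V) '' Icc 0 ![s, t])
      ≤ 4 * ENNReal.ofReal s * ENNReal.ofReal t := by
  have hvol : μH[2] (Icc (0 : Fin 2 → ℝ) ![s, t]) = ENNReal.ofReal s * ENNReal.ofReal t := by
    have hpi : (μH[2] : Measure (Fin 2 → ℝ)) = volume := by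
      simpa using hausdorffMeasure_pi_real (ι := Fin 2)
    rw [hpi, Real.volume_Icc_pi, Fin.prod_univ_two]
    simp
  calc _ ≤ (2 : NNReal) ^ (2 : ℝ) * μH[2] (Icc (0 : Fin 2 → ℝ) ![s, t]) :=
        (lipschitzWith_two_parallelogram a U V hU hV).hausdorffMeasure_image_le (by norm_num) _
    _ = _ := by
        rw [hvol, mul_assoc]
        norm_num

lemma exists_norm_le_one_smul (v : E) : ∃ U : E, ‖U‖ ≤ 1 ∧ v = ‖v‖ • U := by
  rcases eq_or_ne v 0 with rfl | hv
  · exact ⟨0, by simp, by simp⟩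
  · exact ⟨‖v‖⁻¹ • v, by simp [norm_smul, hv], by simp [smul_smul, hv]⟩

lemma toReal_hausdorffMeasure_convexHull_le [MeasurableSpace E] [BorelSpace E] (a b c W : E)
    (hW : W ∈ segment ℝ a c) :
    (μH[2] (convexHull ℝ {a, b, c})).toReal ≤ 4 * dist a c * dist b W := by
  rw [segment_eq_image'] at hW
  obtain ⟨θ, ⟨hθ0, hθ1⟩, hW⟩ := hW
  dsimp only at hW
  obtain ⟨U, hU, hcU⟩ := exists_norm_le_one_smul (c - a)
  obtain ⟨V, hV, hbV⟩ := exists_norm_le_one_smul (b - W)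
  rw [← dist_eq_norm, dist_comm] at hcU
  rw [← dist_eq_norm] at hbV
  set P := (fun x : Fin 2 → ℝ ↦ a + x 0 • U + x 1 • V) '' Icc 0 ![dist a c, dist b W]
  have hPconvex : Convex ℝ P := by
    let g : (Fin 2 → ℝ) →ₗ[ℝ] E :=
      (LinearMap.proj 0).smulRight U + (LinearMap.proj 1).smulRight V
    have hP : P = (a + ·) '' (g '' Icc 0 ![dist a c, dist b W]) := by
      simp only [P, image_image, g, add_assoc]; rfl
    rw [hP]
    exact ((convex_Icc _ _).linear_image g).translate a
  have hsub : convexHull ℝ {a, b, c} ⊆ P := by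
    refine convexHull_min ?_ hPconvex
    have hd : 0 ≤ dist a c := dist_nonneg
    have hh : 0 ≤ dist b W := dist_nonneg
    refine insert_subset_iff.2 ⟨?_, insert_subset_iff.2 ⟨?_, singleton_subset_iff.2 ?_⟩⟩
    · refine ⟨![0, 0], ?_, by simp⟩
      simp [Pi.le_def, Fin.forall_fin_two, hd, hh]
    · refine ⟨![θ * dist a c, dist b W], ?_, ?_⟩
      · simp [Pi.le_def, Fin.forall_fin_two, mul_nonneg hθ0 hd, mul_le_of_le_one_left hd hθ1]
      · simp only [Matrix.cons_val_zero, Matrix.cons_val_one]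
        rw [← hbV, mul_smul, ← hcU, ← hW]
        abel
    · refine ⟨![dist a c, 0], ?_, ?_⟩
      · simp [Pi.le_def, Fin.forall_fin_two, hh]
      · simp only [Matrix.cons_val_zero, Matrix.cons_val_one, zero_smul, add_zero]
        rw [← hcU]
        abel
  have hfin : 4 * ENNReal.ofReal (dist a c) * ENNReal.ofReal (dist b W) ≠ ⊤ := by finiteness
  calc _ ≤ (4 * ENNReal.ofReal (dist a c) * ENNReal.ofReal (dist b W)).toReal :=
        ENNReal.toReal_mono hfin ((measure_mono hsub).trans
          (hausdorffMeasure_parallelogram_le a U V hU hV _ _))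
    _ = _ := by
        rw [ENNReal.toReal_mul, ENNReal.toReal_mul, ENNReal.toReal_ofReal dist_nonneg,
          ENNReal.toReal_ofReal dist_nonneg]
        norm_num

end Triangle

section Menger

variable {n : ℕ} (a b c : EuclideanSpace ℝ (Fin n))

lemma mengerCurv_nonneg : 0 ≤ mengerCurv a b c := by
  unfold mengerCurv; positivity

lemma mengerCurv_comm_left : mengerCurv a b c = mengerCurv b a c := by
  unfold mengerCurv
  rw [insert_comm, dist_comm a b]
  ring_nf

lemma mengerCurv_comm_right : mengerCurv a b c = mengerCurv a c b := by
  unfold mengerCurv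
  rw [pair_comm b c, dist_comm b c, dist_comm a c]
  ring_nf

lemma mengerCurv_le_div_dist : mengerCurv a b c ≤ 32 / dist a c := by
  rcases eq_or_ne (dist a c) 0 with hac | hac
  · simp [mengerCurv, hac]
  refine div_le_of_le_mul₀ (by positivity) (by positivity) ?_
  have hleft := toReal_hausdorffMeasure_convexHull_le a b c a (left_mem_segment ℝ a c)
  have hright := toReal_hausdorffMeasure_convexHull_le a b c c (right_mem_segment ℝ a c)
  have htri := dist_triangle a b c
  rw [dist_comm b a] at hleft
  rw [div_mul_eq_mul_div, le_div_iff₀ (by positivity)]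
  rcases le_total (dist a b) (dist b c) with h | h
  · nlinarith [mul_le_mul_of_nonneg_left h (dist_nonneg : 0 ≤ dist a b),
      mul_le_mul_of_nonneg_left htri (dist_nonneg : 0 ≤ dist a b), dist_nonneg (x := a) (y := c)]
  · nlinarith [mul_le_mul_of_nonneg_left h (dist_nonneg : 0 ≤ dist b c),
      mul_le_mul_of_nonneg_left htri (dist_nonneg : 0 ≤ dist b c), dist_nonneg (x := a) (y := c)]

end Menger

section Curve

variable {E : Type*} [NormedAddCommGroup E] [NormedSpace ℝ E] {Γ Γ' : ℝ → E} {C α : ℝ}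

lemma norm_sub_sub_smul_le (hderiv : ∀ x, HasDerivAt Γ (Γ' x) x)
    (hhol : ∀ x y : ℝ, ‖Γ' x - Γ' y‖ ≤ C * |x - y| ^ α) (hC : 0 ≤ C) (hα : 0 ≤ α)
    {a b s t c : ℝ} (hs : s ∈ Icc a b) (ht : t ∈ Icc a b) (hc : c ∈ Icc a b) :
    ‖Γ t - Γ s - (t - s) • Γ' c‖ ≤ C * (b - a) ^ α * |t - s| := by
  have hderiv' : ∀ x ∈ Icc a b,
      HasDerivWithinAt (fun x ↦ Γ x - x • Γ' c) (Γ' x - Γ' c) (Icc a b) x := fun x _ ↦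
    ((hderiv x).sub ((hasDerivAt_id x).smul_const (Γ' c) |>.congr_deriv (one_smul ℝ _)))
      |>.hasDerivWithinAt
  have hbound : ∀ x ∈ Icc a b, ‖Γ' x - Γ' c‖ ≤ C * (b - a) ^ α := fun x hx ↦ by
    refine (hhol x c).trans (mul_le_mul_of_nonneg_left ?_ hC)
    refine Real.rpow_le_rpow (abs_nonneg _) (abs_sub_le_iff.2 ⟨?_, ?_⟩) hα <;>
      linarith [hx.1, hx.2, hc.1, hc.2]
  have := (convex_Icc a b).norm_image_sub_le_of_norm_hasDerivWithin_le hderiv' hbound hs ht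
  rwa [Real.norm_eq_abs, show Γ t - t • Γ' c - (Γ s - s • Γ' c) = Γ t - Γ s - (t - s) • Γ' c by
    rw [sub_smul]; abel] at this

lemma abs_sub_div_two_le_dist (hderiv : ∀ x, HasDerivAt Γ (Γ' x) x) (hunit : ∀ x, ‖Γ' x‖ = 1)
    (hhol : ∀ x y : ℝ, ‖Γ' x - Γ' y‖ ≤ C * |x - y| ^ α) (hC : 0 ≤ C) (hα : 0 ≤ α)
    {a b s t : ℝ} (hs : s ∈ Icc a b) (ht : t ∈ Icc a b) (hsmall : C * (b - a) ^ α ≤ 1 / 2) :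
    |t - s| / 2 ≤ dist (Γ s) (Γ t) := by
  have htaylor := norm_sub_sub_smul_le hderiv hhol hC hα hs ht hs
  have hsplit : |t - s| ≤ ‖Γ t - Γ s‖ + ‖Γ t - Γ s - (t - s) • Γ' s‖ := by
    calc |t - s| = ‖(Γ t - Γ s) - (Γ t - Γ s - (t - s) • Γ' s)‖ := by
          simp [norm_smul, hunit]
      _ ≤ _ := norm_sub_le _ _
  rw [dist_comm, dist_eq_norm]
  nlinarith [mul_le_mul_of_nonneg_right hsmall (abs_nonneg (t - s))]

lemma dist_lineMap_le (hderiv : ∀ x, HasDerivAt Γ (Γ' x) x)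
    (hhol : ∀ x y : ℝ, ‖Γ' x - Γ' y‖ ≤ C * |x - y| ^ α) (hC : 0 ≤ C) (hα : 0 ≤ α)
    {u v w : ℝ} (huv : u ≤ v) (hvw : v ≤ w) (huw : u < w) :
    dist (Γ v) (AffineMap.lineMap (Γ u) (Γ w) ((v - u) / (w - u)))
      ≤ 2 * C * (w - u) ^ α * ((v - u) * (w - v) / (w - u)) := by
  set θ := (v - u) / (w - u)
  have hT : 0 < w - u := sub_pos.2 huw
  have hθ : θ * (w - u) = v - u := div_mul_cancel₀ _ hT.ne'
  have hθ0 : 0 ≤ θ := div_nonneg (by linarith) hT.le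
  have hθ1 : 0 ≤ 1 - θ := by rw [sub_nonneg, div_le_one hT]; linarith
  have hu : u ∈ Icc u w := ⟨le_rfl, huw.le⟩
  have hv : v ∈ Icc u w := ⟨huv, hvw⟩
  have hw : w ∈ Icc u w := ⟨huw.le, le_rfl⟩
  have h₁ := norm_sub_sub_smul_le hderiv hhol hC hα hu hv hv
  have h₂ := norm_sub_sub_smul_le hderiv hhol hC hα hv hw hv
  -- Expanding both chords at the middle point `v`, the tangent terms cancel.
  have hsplit : Γ v - AffineMap.lineMap (Γ u) (Γ w) θ
      = (1 - θ) • (Γ v - Γ u - (v - u) • Γ' v) - θ • (Γ w - Γ v - (w - v) • Γ' v) := by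
    have hcoef : (1 - θ) * (v - u) = θ * (w - v) := by linear_combination -hθ
    rw [AffineMap.lineMap_apply_module]
    linear_combination (norm := module) hcoef • Γ' v
  rw [abs_of_nonneg (by linarith)] at h₁ h₂
  rw [dist_eq_norm, hsplit]
  calc _ ≤ (1 - θ) * (C * (w - u) ^ α * (v - u)) + θ * (C * (w - u) ^ α * (w - v)) := by
        refine (norm_sub_le _ _).trans (add_le_add ?_ ?_) <;>
          rw [norm_smul, Real.norm_of_nonneg (by assumption)] <;> gcongr
    _ = _ := by
        simp only [θ]
        field_simp
        ring

end Curve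

section CurveCurvature

variable {n : ℕ} {Γ Γ' : ℝ → EuclideanSpace ℝ (Fin n)} {C α : ℝ}

lemma mengerCurv_le_of_le_of_le (hderiv : ∀ x, HasDerivAt Γ (Γ' x) x) (hunit : ∀ x, ‖Γ' x‖ = 1)
    (hhol : ∀ x y : ℝ, ‖Γ' x - Γ' y‖ ≤ C * |x - y| ^ α) (hC : 0 ≤ C) (hα : 0 ≤ α)
    {u v w : ℝ} (huv : u ≤ v) (hvw : v ≤ w) (hsmall : C * (w - u) ^ α ≤ 1 / 2) :
    mengerCurv (Γ u) (Γ v) (Γ w) ≤ 128 * C * (w - u) ^ (α - 1) := by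
  rcases huv.trans hvw |>.eq_or_lt with huw | huw
  · obtain rfl : u = v := le_antisymm huv (huw ▸ hvw)
    rw [show mengerCurv (Γ u) (Γ u) (Γ w) = 0 by simp [mengerCurv]]
    positivity
  have hT : 0 < w - u := sub_pos.2 huw
  have hu : u ∈ Icc u w := ⟨le_rfl, huw.le⟩
  have hv : v ∈ Icc u w := ⟨huv, hvw⟩
  have hw : w ∈ Icc u w := ⟨huw.le, le_rfl⟩
  have hd₁ := abs_sub_div_two_le_dist hderiv hunit hhol hC hα hu hv hsmall
  have hd₂ := abs_sub_div_two_le_dist hderiv hunit hhol hC hα hv hw hsmall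
  rw [abs_of_nonneg (by linarith)] at hd₁ hd₂
  have hθ : (v - u) / (w - u) ∈ Icc (0 : ℝ) 1 :=
    ⟨div_nonneg (by linarith) hT.le, (div_le_one hT).2 (by linarith)⟩
  have harea := toReal_hausdorffMeasure_convexHull_le (Γ u) (Γ v) (Γ w) _
    ((segment_eq_image_lineMap ℝ (Γ u) (Γ w)).symm ▸ mem_image_of_mem _ hθ)
  have hheight := dist_lineMap_le hderiv hhol hC hα huv hvw huw
  refine div_le_of_le_mul₀ (by positivity) (by positivity) ?_
  rw [Real.rpow_sub_one hT.ne']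
  calc 4 * (μH[2] (convexHull ℝ {Γ u, Γ v, Γ w})).toReal
      ≤ 16 * dist (Γ u) (Γ w) * (2 * C * (w - u) ^ α * ((v - u) * (w - v) / (w - u))) := by
        nlinarith [dist_nonneg (x := Γ u) (y := Γ w)]
    _ = 32 * C * (w - u) ^ α / (w - u) * dist (Γ u) (Γ w) * ((v - u) * (w - v)) := by ring
    _ ≤ 32 * C * (w - u) ^ α / (w - u) * dist (Γ u) (Γ w)
          * ((2 * dist (Γ u) (Γ v)) * (2 * dist (Γ v) (Γ w))) := by
        gcongr <;> linarith
    _ = _ := by ring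

lemma mengerCurv_le_diam (hderiv : ∀ x, HasDerivAt Γ (Γ' x) x) (hunit : ∀ x, ‖Γ' x‖ = 1)
    (hhol : ∀ x y : ℝ, ‖Γ' x - Γ' y‖ ≤ C * |x - y| ^ α) (hC : 0 ≤ C) (hα : 0 ≤ α)
    {u v w : ℝ} (hsmall : C * Metric.diam {u, v, w} ^ α ≤ 1 / 2) :
    mengerCurv (Γ u) (Γ v) (Γ w) ≤ 128 * C * Metric.diam {u, v, w} ^ (α - 1) := by
  wlog huv : u ≤ v generalizing u v w
  · have := this (u := v) (v := u) (w := w) (by rwa [insert_comm]) (le_of_not_ge huv)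
    rwa [insert_comm, ← mengerCurv_comm_left] at this
  wlog hvw : v ≤ w generalizing u v w
  · rcases le_total u w with huw | hwu
    · have := this (u := u) (v := w) (w := v) (by rwa [pair_comm]) huw (le_of_not_ge hvw)
      rwa [pair_comm, ← mengerCurv_comm_right] at this
    · have hset : ({w, u, v} : Set ℝ) = {u, v, w} := by rw [insert_comm, pair_comm]
      have := this (u := w) (v := u) (w := v) (by rwa [hset]) hwu huv
      rwa [hset, mengerCurv_comm_left, ← mengerCurv_comm_right] at this
  have hdiam : Metric.diam ({u, v, w} : Set ℝ) = w - u := by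
    rw [Metric.diam_triple, Real.dist_eq, Real.dist_eq, Real.dist_eq, abs_of_nonpos (by linarith),
      abs_of_nonpos (by linarith), abs_of_nonpos (by linarith)]
    simp only [neg_sub]
    rw [max_eq_right (by linarith : v - u ≤ w - u), max_eq_left (by linarith : w - v ≤ w - u)]
  rw [hdiam] at hsmall ⊢
  exact mengerCurv_le_of_le_of_le hderiv hunit hhol hC hα huv hvw hsmall

end CurveCurvature

section Periodic

variable {L : ℝ}

lemma Function.Periodic.injective_lift {X : Type*} {Γ : ℝ → X} (hL : 0 < L)
    (hper : Function.Periodic Γ L) (hinj : InjOn Γ (Ico 0 L)) : Function.Injective hper.lift := by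
  have := Fact.mk hL
  have hsurj : ∀ a : AddCircle L, ∃ s ∈ Ico 0 L, (s : AddCircle L) = a := fun a ↦ by
    have ha : a ∈ ((↑) : ℝ → AddCircle L) '' Ico 0 (0 + L) := by
      rw [AddCircle.coe_image_Ico_eq]; exact mem_univ a
    simpa using ha
  intro a b hab
  obtain ⟨s, hs, rfl⟩ := hsurj a
  obtain ⟨t, ht, rfl⟩ := hsurj b
  exact congrArg _ (hinj hs ht hab)

lemma exists_pos_le_dist_of_le_norm_coe {X : Type*} [MetricSpace X] {Γ : ℝ → X} {δ : ℝ}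
    (hL : 0 < L) (hδ : 0 < δ) (hcont : Continuous Γ) (hper : Function.Periodic Γ L)
    (hinj : InjOn Γ (Ico 0 L)) :
    ∃ m > 0, ∀ s t : ℝ, δ ≤ ‖((s - t : ℝ) : AddCircle L)‖ → m ≤ dist (Γ s) (Γ t) := by
  have := Fact.mk hL
  set K := {q : AddCircle L × AddCircle L | δ ≤ ‖q.1 - q.2‖}
  have hK : IsCompact K :=
    (isClosed_le continuous_const (continuous_fst.sub continuous_snd).norm).isCompact
  have hdist :
      Continuous fun q : AddCircle L × AddCircle L ↦ dist (hper.lift q.1) (hper.lift q.2) :=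
    have hlift : Continuous hper.lift := hcont.quotient_liftOn' _
    (hlift.comp continuous_fst).dist (hlift.comp continuous_snd)
  suffices ∃ m > 0, ∀ q ∈ K, m ≤ dist (hper.lift q.1) (hper.lift q.2) by
    obtain ⟨m, hm, hmK⟩ := this
    exact ⟨m, hm, fun s t hst ↦ hmK (s, t) (by simpa [K, AddCircle.coe_sub] using hst)⟩
  rcases K.eq_empty_or_nonempty with hKe | hKne
  · exact ⟨1, one_pos, by simp [hKe]⟩
  obtain ⟨q, hqK, hqmin⟩ := hK.exists_isMinOn hKne hdist.continuousOn
  refine ⟨_, dist_pos.2 fun heq ↦ ?_, fun q' hq' ↦ hqmin hq'⟩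
  have hq : q.1 = q.2 := hper.injective_lift hL hinj heq
  have : δ ≤ ‖q.1 - q.2‖ := hqK
  rw [hq, sub_self, norm_zero] at this
  exact hδ.not_ge this

end Periodic

section PointwiseBound

variable {n : ℕ} {Γ Γ' : ℝ → EuclideanSpace ℝ (Fin n)} {C α L δ m : ℝ}

lemma Function.Periodic.exists_apply_eq_abs_sub_eq_norm_coe {X : Type*} {f : ℝ → X}
    (hper : Function.Periodic f L) (x y : ℝ) :
    ∃ y', f y' = f y ∧ |x - y'| = ‖((x - y : ℝ) : AddCircle L)‖ := by
  refine ⟨y + round (L⁻¹ * (x - y)) * L, hper.int_mul _ y, ?_⟩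
  rw [AddCircle.norm_eq]
  ring_nf

lemma mengerCurv_le_max (hderiv : ∀ x, HasDerivAt Γ (Γ' x) x) (hunit : ∀ x, ‖Γ' x‖ = 1)
    (hhol : ∀ x y : ℝ, ‖Γ' x - Γ' y‖ ≤ C * |x - y| ^ α) (hC : 0 ≤ C) (hα : 0 ≤ α) (hα1 : α ≤ 1)
    (hper : Function.Periodic Γ L) (hsmall : C * (2 * δ) ^ α ≤ 1 / 2) (hm : 0 < m)
    (hsep : ∀ s t : ℝ, δ ≤ ‖((s - t : ℝ) : AddCircle L)‖ → m ≤ dist (Γ s) (Γ t)) (x y z : ℝ) :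
    mengerCurv (Γ x) (Γ y) (Γ z) ≤ max (32 / m) (128 * C *
      (‖((x - y : ℝ) : AddCircle L)‖ * ‖((x - z : ℝ) : AddCircle L)‖) ^ ((α - 1) / 2)) := by
  set dy := ‖((x - y : ℝ) : AddCircle L)‖
  set dz := ‖((x - z : ℝ) : AddCircle L)‖
  have h32 : ∀ s t, δ ≤ ‖((s - t : ℝ) : AddCircle L)‖ → 32 / dist (Γ s) (Γ t) ≤ 32 / m :=
    fun s t hst ↦ div_le_div_of_nonneg_left (by norm_num) hm (hsep s t hst)
  by_cases hfar : δ ≤ dy ∨ δ ≤ dz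
  · refine le_max_of_le_left ?_
    rcases hfar with hy | hz
    · rw [mengerCurv_comm_right]
      exact (mengerCurv_le_div_dist _ _ _).trans (h32 x y hy)
    · exact (mengerCurv_le_div_dist _ _ _).trans (h32 x z hz)
  simp only [not_or, not_le] at hfar
  -- Otherwise translate `y, z` by multiples of `L` next to `x`: all three then lie within `2δ`.
  obtain ⟨y', hy', hxy'⟩ := hper.exists_apply_eq_abs_sub_eq_norm_coe x y
  obtain ⟨z', hz', hxz'⟩ := hper.exists_apply_eq_abs_sub_eq_norm_coe x z
  rw [← hy', ← hz']
  set D := Metric.diam ({x, y', z'} : Set ℝ)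
  have hD : D = max (max dy dz) |y' - z'| := by
    simp only [D, Metric.diam_triple, Real.dist_eq, hxy', hxz']; rfl
  have hdyD : dy ≤ D := hD ▸ le_max_of_le_left (le_max_left _ _)
  have hdzD : dz ≤ D := hD ▸ le_max_of_le_left (le_max_right _ _)
  have hD2δ : D ≤ 2 * δ := by
    rw [hD]
    have : 0 ≤ dy := norm_nonneg _
    have : 0 ≤ dz := norm_nonneg _
    refine max_le (max_le (by linarith) (by linarith)) ?_
    linarith [abs_sub_le y' x z', abs_sub_comm y' x]
  have hcurv := mengerCurv_le_diam hderiv hunit hhol hC hα (u := x) (v := y') (w := z')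
    (hsmall.trans' (by gcongr))
  rcases (mul_nonneg (norm_nonneg _) (norm_nonneg _) : 0 ≤ dy * dz).eq_or_lt with hdeg | hpos
  · refine le_max_of_le_left (le_of_eq_of_le ?_ (by positivity))
    rcases mul_eq_zero.1 hdeg.symm with h | h
    · obtain rfl : x = y' := sub_eq_zero.1 (abs_eq_zero.1 (hxy'.trans h))
      simp [mengerCurv]
    · obtain rfl : x = z' := sub_eq_zero.1 (abs_eq_zero.1 (hxz'.trans h))
      simp [mengerCurv]
  · refine le_max_of_le_right (hcurv.trans ?_)
    have hD0 : 0 ≤ D := Metric.diam_nonneg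
    have hprod : dy * dz ≤ D ^ (2 : ℝ) := by
      rw [Real.rpow_two, sq]
      exact mul_le_mul hdyD hdzD (norm_nonneg _) hD0
    calc 128 * C * D ^ (α - 1) = 128 * C * (D ^ (2 : ℝ)) ^ ((α - 1) / 2) := by
          rw [← Real.rpow_mul hD0]; ring_nf
      _ ≤ _ := mul_le_mul_of_nonneg_left
          (Real.rpow_le_rpow_of_nonpos hpos hprod (by linarith)) (by positivity)

end PointwiseBound

section Integral

lemma AddCircle.setLIntegral_Ico_norm_coe_sub (L : ℝ) [Fact (0 < L)] (f : ℝ → ℝ≥0∞) (x : ℝ) :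
    ∫⁻ t in Ico 0 L, f ‖((x - t : ℝ) : AddCircle L)‖ = ∫⁻ b : AddCircle L, f ‖b‖ := by
  calc ∫⁻ t in Ico 0 L, f ‖((x - t : ℝ) : AddCircle L)‖
      = ∫⁻ t in Ioc 0 (0 + L), f ‖(t : AddCircle L) - x‖ := by
        rw [zero_add, setLIntegral_congr Ico_ae_eq_Ioc]
        simp only [AddCircle.coe_sub, norm_sub_rev]
    _ = ∫⁻ b : AddCircle L, f ‖b - x‖ :=
        AddCircle.lintegral_preimage L 0 fun b : AddCircle L ↦ f ‖b - x‖
    _ = ∫⁻ b : AddCircle L, f ‖b‖ := lintegral_sub_right_eq_self (fun b ↦ f ‖b‖) _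

lemma AddCircle.lintegral_norm_rpow_lt_top (L : ℝ) [hL : Fact (0 < L)] {q : ℝ} (hq : -1 < q) :
    ∫⁻ b : AddCircle L, ENNReal.ofReal (‖b‖ ^ q) < ⊤ := by
  rw [← AddCircle.lintegral_preimage L (-(L / 2)),
    setLIntegral_congr_fun measurableSet_Ioc (g := fun a ↦ ENNReal.ofReal (|a| ^ q)) fun a ha ↦ by
      rw [(AddCircle.norm_coe_eq_abs_iff L hL.out.ne').2]
      rw [abs_of_pos hL.out]
      exact abs_le.2 ⟨by linarith [ha.1], by linarith [ha.2]⟩]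
  have hloc : LocallyIntegrable (fun a : ℝ ↦ |a| ^ q) :=
    locallyIntegrable_of_norm_le_rpow (C := 1) (α := -q) (by simp) (by simpa using by linarith)
      (ae_of_all _ fun a ↦ by simp [abs_rpow_of_nonneg (abs_nonneg a)])
      (continuous_abs.measurable.pow_const q).aestronglyMeasurable
  exact ((hloc.integrableOn_isCompact isCompact_Icc).mono_set Ioc_subset_Icc_self).lintegral_lt_top

lemma lintegral_lintegral_lintegral_lt_top {Ω : Type*} [MeasurableSpace Ω] {μ : Measure Ω}
    [IsFiniteMeasure μ] {f : Ω → Ω → Ω → ℝ≥0∞} {g : Ω → Ω → ℝ≥0∞} {a b K : ℝ≥0∞}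
    (ha : a ≠ ⊤) (hb : b ≠ ⊤) (hK : K ≠ ⊤) (hg : ∀ x, Measurable (g x))
    (hgK : ∀ x, ∫⁻ t, g x t ∂μ ≤ K) (hf : ∀ x y z, f x y z ≤ a + b * g x y * g x z) :
    ∫⁻ x, ∫⁻ y, ∫⁻ z, f x y z ∂μ ∂μ ∂μ < ⊤ := by
  have hinner : ∀ x y, ∫⁻ z, f x y z ∂μ ≤ a * μ univ + b * K * g x y := fun x y ↦
    calc ∫⁻ z, f x y z ∂μ ≤ ∫⁻ z, a + b * g x y * g x z ∂μ := lintegral_mono (hf x y)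
      _ = a * μ univ + b * g x y * ∫⁻ z, g x z ∂μ := by
        rw [lintegral_add_left measurable_const, lintegral_const, lintegral_const_mul _ (hg x)]
      _ ≤ a * μ univ + b * K * g x y := by
        rw [mul_right_comm b K]
        gcongr
        exact hgK x
  have hmiddle : ∀ x, ∫⁻ y, ∫⁻ z, f x y z ∂μ ∂μ ≤ a * μ univ * μ univ + b * K * K := fun x ↦
    calc ∫⁻ y, ∫⁻ z, f x y z ∂μ ∂μ ≤ ∫⁻ y, a * μ univ + b * K * g x y ∂μ :=
          lintegral_mono (hinner x)
      _ = a * μ univ * μ univ + b * K * ∫⁻ y, g x y ∂μ := by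
        rw [lintegral_add_left measurable_const, lintegral_const, lintegral_const_mul _ (hg x)]
      _ ≤ a * μ univ * μ univ + b * K * K := by
        gcongr
        exact hgK x
  calc _ ≤ ∫⁻ _, a * μ univ * μ univ + b * K * K ∂μ := lintegral_mono hmiddle
    _ < ⊤ := by
      rw [lintegral_const]
      finiteness

end Integral

lemma ofReal_rpow_le_of_le_max {κ A B d₁ d₂ β p : ℝ} (hA : 0 ≤ A) (hB : 0 ≤ B) (hd₁ : 0 ≤ d₁)
    (hd₂ : 0 ≤ d₂) (hp : 0 ≤ p) (hκ : 0 ≤ κ) (h : κ ≤ max A (B * (d₁ * d₂) ^ β)) :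
    ENNReal.ofReal (κ ^ p) ≤ ENNReal.ofReal (A ^ p)
      + ENNReal.ofReal (B ^ p) * ENNReal.ofReal (d₁ ^ (β * p)) * ENNReal.ofReal (d₂ ^ (β * p)) := by
  have hsplit : (B * (d₁ * d₂) ^ β) ^ p = B ^ p * d₁ ^ (β * p) * d₂ ^ (β * p) := by
    rw [Real.mul_rpow hB (by positivity), ← Real.rpow_mul (by positivity),
      Real.mul_rpow hd₁ hd₂, mul_assoc]
  rw [← ENNReal.ofReal_mul (by positivity), ← ENNReal.ofReal_mul (by positivity),
    ← ENNReal.ofReal_add (by positivity) (by positivity), ← hsplit]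
  refine ENNReal.ofReal_le_ofReal ?_
  rcases le_max_iff.1 h with h | h
  · exact (Real.rpow_le_rpow hκ h hp).trans (le_add_of_nonneg_right (by positivity))
  · exact (Real.rpow_le_rpow hκ h hp).trans (le_add_of_nonneg_left (by positivity))

lemma exists_pos_mul_rpow_two_mul_le {C α : ℝ} (hC : 0 ≤ C) (hα : 0 < α) :
    ∃ δ > 0, C * (2 * δ) ^ α ≤ 1 / 2 := by
  refine ⟨((2 * C + 1)⁻¹ ^ α⁻¹) / 2, by positivity, ?_⟩
  rw [mul_div_cancel₀ _ two_ne_zero, Real.rpow_inv_rpow (by positivity) hα.ne', ← div_eq_mul_inv,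
    div_le_iff₀ (by positivity)]
  linarith

/-- If `Γ : S_L → ℝ³` is an injective arc-length parametrization of
class `C^{1,α}` with `α > 1 - 2/p` for some `p > 2`, then `M_p(γ) < ∞`. -/
theorem mengerEnergy_lt_top_of_C1alpha (L : ℝ) (hL : 0 < L) (p α C : ℝ)
    (hp : 2 < p) (hα : 1 - 2 / p < α) (hα1 : α ≤ 1)
    (Γ Γ' : ℝ → EuclideanSpace ℝ (Fin 3))
    (hper : Function.Periodic Γ L)
    (hinj : Set.InjOn Γ (Set.Ico 0 L))
    (hderiv : ∀ x, HasDerivAt Γ (Γ' x) x)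
    (hunit : ∀ x, ‖Γ' x‖ = 1)
    (hhol : ∀ x y : ℝ, ‖Γ' x - Γ' y‖ ≤ C * |x - y| ^ α) :
    mengerEnergy p L Γ < ⊤ := by
  have hp0 : 0 < p := by linarith
  have h2p : 2 / p * p = 2 := div_mul_cancel₀ 2 hp0.ne'
  have hα0 : 0 < α := by nlinarith
  have hq : -1 < (α - 1) / 2 * p := by nlinarith
  have hC : 0 ≤ C := by simpa using (norm_nonneg _).trans (hhol 1 0)
  have hcont : Continuous Γ := continuous_iff_continuousAt.2 fun x ↦ (hderiv x).continuousAt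
  obtain ⟨δ, hδ, hsmall⟩ := exists_pos_mul_rpow_two_mul_le hC hα0
  obtain ⟨m, hm, hsep⟩ := exists_pos_le_dist_of_le_norm_coe hL hδ hcont hper hinj
  have := Fact.mk hL
  refine lintegral_lintegral_lintegral_lt_top
    (g := fun x t ↦ ENNReal.ofReal (‖((x - t : ℝ) : AddCircle L)‖ ^ ((α - 1) / 2 * p)))
    ofReal_ne_top ofReal_ne_top (AddCircle.lintegral_norm_rpow_lt_top L hq).ne
    (fun x ↦ by measurability)
    (fun x ↦ (AddCircle.setLIntegral_Ico_norm_coe_sub L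
      (fun r ↦ ENNReal.ofReal (r ^ ((α - 1) / 2 * p))) x).le) fun x y z ↦
    ofReal_rpow_le_of_le_max (by positivity) (by positivity) (norm_nonneg _) (norm_nonneg _)
      hp0.le (mengerCurv_nonneg _ _ _)
      (mengerCurv_le_max hderiv hunit hhol hC hα0.le hα1 hper hsmall hm hsep x y z)
end

section
/- Let F : ℝ → ℝ be Lipschitz with Lipschitz constant L, and for 0 ≤ x < z < y denote the graph points ⃗t = (t, F(t)). If the angle between ⃗y - ⃗x and ⃗z - ⃗x is at most π/3, then the Menger curvature satisfies 1/R(⃗x, ⃗y, ⃗z) ≥ C(L) · |(F(y)-F(x))/(y-x) - (F(z)-F(x))/(z-x)| · (z-x)/(y-x)², for a constant C(L) > 0 depending only on L. -/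
/-!
The triangle on `⃗x, ⃗y, ⃗z` is the image of a fixed reference triangle under the affine map
with linear part `(⃗y - ⃗x, ⃗z - ⃗x)`, so its area is a fixed constant times
`|(y - x)(F z - F x) - (z - x)(F y - F x)|`, which is exactly `(y - x)(z - x)` times the difference
of the two slopes. Since `F` is `L`-Lipschitz, every side of the triangle has length at most
`(1 + L)(y - x)`, which bounds the denominator of the Menger curvature.
-/

open MeasureTheory Set Real ENNReal
open Pointwise

/-- The point `(t, F(t)) ∈ ℝ²` on the graph of `F`. -/
noncomputable def graphPt (F : ℝ → ℝ) (t : ℝ) : EuclideanSpace ℝ (Fin 2) :=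
  (EuclideanSpace.equiv (Fin 2) ℝ).symm ![t, F t]

-- Mathlib's instance is stated for `μH[((2 : ℕ) : ℝ)]`, which does not unify with `μH[2]`.
instance : (μH[2] : Measure (EuclideanSpace ℝ (Fin 2))).IsAddHaarMeasure := by
  exact_mod_cast
    (inferInstance : (μH[(2 : ℕ)] : Measure (EuclideanSpace ℝ (Fin 2))).IsAddHaarMeasure)

noncomputable def stdTriangle : Set (EuclideanSpace ℝ (Fin 2)) :=
  convexHull ℝ {0, EuclideanSpace.single 0 1, EuclideanSpace.single 1 1}

lemma span_single_one_eq_top :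
    Submodule.span ℝ {EuclideanSpace.single 0 1, EuclideanSpace.single 1 1} =
      (⊤ : Submodule ℝ (EuclideanSpace ℝ (Fin 2))) := by
  refine Submodule.eq_top_iff'.2 fun p => ?_
  have hp : p = p 0 • EuclideanSpace.single 0 1 + p 1 • EuclideanSpace.single 1 1 := by
    ext i; fin_cases i <;> simp
  rw [hp]
  exact add_mem (Submodule.smul_mem _ _ (Submodule.subset_span (by simp)))
    (Submodule.smul_mem _ _ (Submodule.subset_span (by simp)))

lemma interior_stdTriangle_nonempty : (interior stdTriangle).Nonempty := by
  rw [stdTriangle, (convex_convexHull ℝ _).interior_nonempty_iff_affineSpan_eq_top,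
    affineSpan_convexHull, ← AffineSubspace.coe_eq_univ_iff, affineSpan_insert_zero,
    span_single_one_eq_top, Submodule.top_coe]

section
variable (μ : Measure (EuclideanSpace ℝ (Fin 2))) [μ.IsAddHaarMeasure]

lemma addHaar_stdTriangle_pos : 0 < μ stdTriangle :=
  μ.measure_pos_of_nonempty_interior interior_stdTriangle_nonempty

lemma addHaar_stdTriangle_lt_top : μ stdTriangle < ⊤ :=
  ((((finite_singleton _).insert _).insert _).isCompact_convexHull ℝ).measure_lt_top

lemma addHaar_convexHull_triangle (a b c : EuclideanSpace ℝ (Fin 2)) :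
    μ (convexHull ℝ {a, b, c}) =
      ENNReal.ofReal |(b 0 - a 0) * (c 1 - a 1) - (c 0 - a 0) * (b 1 - a 1)| * μ stdTriangle := by
  set T := Matrix.toLpLin 2 2 !![b 0 - a 0, c 0 - a 0; b 1 - a 1, c 1 - a 1]
  have hT :
      T '' {0, EuclideanSpace.single 0 1, EuclideanSpace.single 1 1} = {0, b - a, c - a} := by
    have h0 : T (EuclideanSpace.single 0 1) = b - a := by
      ext i; fin_cases i <;> simp [T, Matrix.toLpLin_apply]
    have h1 : T (EuclideanSpace.single 1 1) = c - a := by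
      ext i; fin_cases i <;> simp [T, Matrix.toLpLin_apply]
    rw [image_insert_eq, image_insert_eq, image_singleton, map_zero, h0, h1]
  have hvadd : a +ᵥ T '' stdTriangle = convexHull ℝ {a, b, c} := by
    rw [stdTriangle, LinearMap.image_convexHull, hT, ← convexHull_vadd, vadd_set_insert,
      vadd_set_insert, vadd_set_singleton]
    simp [vadd_eq_add]
  rw [← hvadd, measure_vadd, Measure.addHaar_image_linearMap, LinearMap.det_toLpLin,
    Matrix.det_fin_two_of]
end

@[simp] lemma graphPt_apply_zero (F : ℝ → ℝ) (t : ℝ) : graphPt F t 0 = t := rfl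

@[simp] lemma graphPt_apply_one (F : ℝ → ℝ) (t : ℝ) : graphPt F t 1 = F t := rfl

lemma dist_graphPt (F : ℝ → ℝ) (s t : ℝ) :
    dist (graphPt F s) (graphPt F t) = √((s - t) ^ 2 + (F s - F t) ^ 2) := by
  simp [EuclideanSpace.dist_eq, Fin.sum_univ_two, Real.dist_eq, sq_abs]

lemma graphPt_injective (F : ℝ → ℝ) : Function.Injective (graphPt F) := fun s t h => by
  simpa using congrArg (· 0) h

lemma dist_graphPt_le (F : ℝ → ℝ) (s t : ℝ) :
    dist (graphPt F s) (graphPt F t) ≤ |s - t| + |F s - F t| := by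
  rw [dist_graphPt, Real.sqrt_le_left (by positivity)]
  nlinarith [abs_nonneg (s - t), abs_nonneg (F s - F t), sq_abs (s - t), sq_abs (F s - F t)]

lemma le_mengerCurv_of_dist_le {n : ℕ} {a b c : EuclideanSpace ℝ (Fin n)} {d : ℝ}
    (hab : a ≠ b) (hbc : b ≠ c) (hac : a ≠ c)
    (hab_le : dist a b ≤ d) (hbc_le : dist b c ≤ d) (hac_le : dist a c ≤ d) :
    4 * (μH[2] (convexHull ℝ {a, b, c})).toReal / d ^ 3 ≤ mengerCurv a b c := by
  have hd : 0 ≤ d := dist_nonneg.trans hab_le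
  have hprod : dist a b * dist b c * dist a c ≤ d ^ 3 := by
    calc dist a b * dist b c * dist a c ≤ d * d * d := by gcongr
      _ = d ^ 3 := by ring
  exact div_le_div_of_nonneg_left (by positivity)
    (mul_pos (mul_pos (dist_pos.2 hab) (dist_pos.2 hbc)) (dist_pos.2 hac)) hprod

/-- For `F : ℝ → ℝ` Lipschitz with constant `L` and graph points
`⃗t = (t, F t)` with `0 ≤ x < z < y`, if the angle between `⃗y - ⃗x` and `⃗z - ⃗x` is
at most `π/3`, then `1/R(⃗x,⃗y,⃗z) ≥ C(L)·|ΔF(y)-ΔF(z)|·(z-x)/(y-x)²` where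
`ΔF(t) = (F t - F x)/(t - x)` and `C(L) > 0` depends only on `L`. -/
theorem mengerCurv_lowerBound_graph (L : ℝ) (hL : 0 ≤ L) :
    ∃ C : ℝ, 0 < C ∧
      ∀ F : ℝ → ℝ, (∀ a b : ℝ, |F a - F b| ≤ L * |a - b|) →
      ∀ x z y : ℝ, 0 ≤ x → x < z → z < y →
        InnerProductGeometry.angle (graphPt F y - graphPt F x) (graphPt F z - graphPt F x)
          ≤ π / 3 →
        C * |(F y - F x) / (y - x) - (F z - F x) / (z - x)| * (z - x) / (y - x) ^ 2
          ≤ mengerCurv (graphPt F x) (graphPt F y) (graphPt F z) := by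
  set V := (μH[2] stdTriangle).toReal
  have hV : 0 < V := ENNReal.toReal_pos (addHaar_stdTriangle_pos _).ne'
    (addHaar_stdTriangle_lt_top _).ne
  refine ⟨4 * V / (1 + L) ^ 3, by positivity, fun F hF x z y _ hxz hzy _ => ?_⟩
  have hdist : ∀ s t, s ∈ Icc x y → t ∈ Icc x y →
      dist (graphPt F s) (graphPt F t) ≤ (1 + L) * (y - x) := fun s t hs ht => by
    have hst : |s - t| ≤ y - x :=
      abs_sub_le_iff.2 ⟨by linarith [hs.2, ht.1], by linarith [hs.1, ht.2]⟩
    linarith [dist_graphPt_le F s t, hF s t, mul_le_mul_of_nonneg_left hst hL]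
  have hyx : 0 < y - x := by linarith
  have hzx : 0 < z - x := by linarith
  have hslopes : |(F y - F x) / (y - x) - (F z - F x) / (z - x)| =
      |(y - x) * (F z - F x) - (z - x) * (F y - F x)| / ((y - x) * (z - x)) := by
    rw [← abs_of_pos (mul_pos hyx hzx), ← abs_div, ← abs_neg]
    congr 1
    field_simp
    ring
  calc 4 * V / (1 + L) ^ 3 * |(F y - F x) / (y - x) - (F z - F x) / (z - x)| * (z - x)
        / (y - x) ^ 2
      = 4 * (|(y - x) * (F z - F x) - (z - x) * (F y - F x)| * V) / ((1 + L) * (y - x)) ^ 3 := by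
        rw [hslopes]
        field_simp
    _ = 4 * (μH[2] (convexHull ℝ {graphPt F x, graphPt F y, graphPt F z})).toReal
          / ((1 + L) * (y - x)) ^ 3 := by
        rw [addHaar_convexHull_triangle, ENNReal.toReal_mul, ENNReal.toReal_ofReal (abs_nonneg _)]
        simp only [graphPt_apply_zero, graphPt_apply_one, V]
    _ ≤ mengerCurv (graphPt F x) (graphPt F y) (graphPt F z) :=
        le_mengerCurv_of_dist_le ((graphPt_injective F).ne (by linarith))
          ((graphPt_injective F).ne (by linarith)) ((graphPt_injective F).ne (by linarith))
          (hdist _ _ ⟨le_rfl, by linarith⟩ ⟨by linarith, le_rfl⟩)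
          (hdist _ _ ⟨by linarith, le_rfl⟩ ⟨hxz.le, hzy.le⟩)
          (hdist _ _ ⟨le_rfl, by linarith⟩ ⟨hxz.le, hzy.le⟩)
end
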